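/- Let X be a metrized Suslin space, Y a separable Fréchet space, and f : X → Y a function. Then f is Baire-2 if and only if there exists a nested (decreasing) sequence (G_n)_{n=1}^∞ of Fσ subsets of X × Y, each of whose vertical sections G_n(x) is convex, such that: (i) ⋂_{n=1}^∞ G_n = gr(f); (ii) for each x ∈ X the diameter of G_n(x) tends to 0 as n → ∞; and (iii) for every open subset U of Y and every n, the projection of (X × U) ∩ G_n to X is an Fσ subset of X. -/

import Mathlib

open Filter Topology

/-- A function is Baire-1 if it is the pointwise limit of a sequence of continuous functions. -/
def BaireOne {X Y : Type*} [TopologicalSpace X] [TopologicalSpace Y] (f : X → Y) : Prop :=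
  ∃ g : ℕ → X → Y, (∀ n, Continuous (g n)) ∧
    ∀ x, Filter.Tendsto (fun n => g n x) Filter.atTop (nhds (f x))

/-- A function is Baire-2 if it is the pointwise limit of a sequence of Baire-1 functions. -/
def BaireTwo {X Y : Type*} [TopologicalSpace X] [TopologicalSpace Y] (f : X → Y) : Prop :=
  ∃ g : ℕ → X → Y, (∀ n, BaireOne (g n)) ∧
    ∀ x, Filter.Tendsto (fun n => g n x) Filter.atTop (nhds (f x))

/-- An Fσ set is a countable union of closed sets. -/
def IsFSigma {Z : Type*} [TopologicalSpace Z] (s : Set Z) : Prop :=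
  ∃ F : ℕ → Set Z, (∀ n, IsClosed (F n)) ∧ s = ⋃ n, F n

/-!
If `f = lim fₘ` with every `fₘ` Baire-1 and `(Vₙ)` is a decreasing basis of convex open
neighbourhoods of `0` in `Y`, take `Gₙ = {(x, y) | y ∈ conv {fₘ x | m ≥ n} + Vₙ}`. Its sections
shrink to `f x` because the tail of `(fₘ x)` eventually lies in the convex set `f x + Vₙ`. The
hull of finitely many terms is the image of a standard simplex, so `Gₙ` and its projections over
open sets are countable unions of preimages of open sets under Baire-1 maps, hence Fσ.

Conversely, for each `n` the projections of `Gₙ` over the balls of radius `1/n` around a dense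
sequence `(uₖ)` form a countable Fσ cover of `X`. Refine it to a disjoint Fσ partition and let
`hₙ` be `uₖ` on the pieces lying over `B(uₖ, 1/n)`: by a Urysohn partition `hₙ` is Baire-1, and
`hₙ x` is within `1/n + diam Gₙ(x)` of `f x`.
-/

open Set Function
open scoped Pointwise ENNReal

section FSigma

variable {Z : Type*} [TopologicalSpace Z]

theorem isFSigma_iff_isGδ_compl {s : Set Z} : IsFSigma s ↔ IsGδ sᶜ := by
  rw [isGδ_iff_eq_iInter_nat]
  constructor
  · rintro ⟨F, hF, rfl⟩
    exact ⟨fun n => (F n)ᶜ, fun n => (hF n).isOpen_compl, compl_iUnion F⟩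
  · rintro ⟨U, hU, hs⟩
    exact ⟨fun n => (U n)ᶜ, fun n => (hU n).isClosed_compl,
      by rw [← compl_iInter, ← hs, compl_compl]⟩

theorem IsFSigma.iUnion {ι : Sort*} [Countable ι] {s : ι → Set Z} (hs : ∀ i, IsFSigma (s i)) :
    IsFSigma (⋃ i, s i) := by
  simp only [isFSigma_iff_isGδ_compl, compl_iUnion] at hs ⊢
  exact .iInter hs

theorem IsFSigma.inter {s t : Set Z} (hs : IsFSigma s) (ht : IsFSigma t) : IsFSigma (s ∩ t) := by
  rw [isFSigma_iff_isGδ_compl] at *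
  rw [compl_inter]
  exact hs.union ht

theorem IsClosed.isFSigma {s : Set Z} (hs : IsClosed s) : IsFSigma s :=
  isFSigma_iff_isGδ_compl.2 hs.isOpen_compl.isGδ

theorem IsOpen.isFSigma [PerfectlyNormalSpace Z] {s : Set Z} (hs : IsOpen s) : IsFSigma s :=
  isFSigma_iff_isGδ_compl.2 hs.isClosed_compl.isGδ

theorem IsOpen.exists_isClosed_subset_mem_nhds [PerfectlyNormalSpace Z] {U : Set Z}
    (hU : IsOpen U) :
    ∃ C : ℕ → Set Z, (∀ n, IsClosed (C n)) ∧ (∀ n, C n ⊆ U) ∧ ∀ z ∈ U, ∃ n, C n ∈ 𝓝 z := by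
  obtain ⟨F, hF, rfl⟩ := hU.isFSigma
  choose O hO hFO hOU using fun n => normal_exists_closure_subset (hF n) hU (subset_iUnion F n)
  refine ⟨fun n => closure (O n), fun n => isClosed_closure, hOU, fun z hz => ?_⟩
  obtain ⟨n, hn⟩ := mem_iUnion.1 hz
  exact ⟨n, mem_of_superset ((hO n).mem_nhds (hFO n hn)) subset_closure⟩

end FSigma

section BaireOne

variable {X W : Type*} [TopologicalSpace X] [TopologicalSpace W]

theorem Continuous.baireOne {f : X → W} (hf : Continuous f) : BaireOne f :=
  ⟨fun _ => f, fun _ => hf, fun _ => tendsto_const_nhds⟩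

theorem BaireOne.comp_continuous {V : Type*} [TopologicalSpace V] {f : X → W} (hf : BaireOne f)
    {φ : V → X} (hφ : Continuous φ) : BaireOne (f ∘ φ) := by
  obtain ⟨g, hg, hgf⟩ := hf
  exact ⟨fun n => g n ∘ φ, fun n => (hg n).comp hφ, fun v => hgf (φ v)⟩

theorem BaireOne.prodMk {V : Type*} [TopologicalSpace V] {f : X → W} {f' : X → V}
    (hf : BaireOne f) (hf' : BaireOne f') : BaireOne fun x => (f x, f' x) := by
  obtain ⟨g, hg, hgf⟩ := hf
  obtain ⟨g', hg', hgf'⟩ := hf'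
  exact ⟨fun n x => (g n x, g' n x), fun n => (hg n).prodMk (hg' n),
    fun x => (hgf x).prodMk_nhds (hgf' x)⟩

theorem BaireOne.pi {ι : Type*} {f : ι → X → W} (hf : ∀ i, BaireOne (f i)) :
    BaireOne fun x i => f i x := by
  choose g hg hgf using hf
  exact ⟨fun n x i => g i n x, fun n => continuous_pi fun i => hg i n,
    fun x => tendsto_pi_nhds.2 fun i => hgf i x⟩

theorem BaireOne.isFSigma_preimage [PerfectlyNormalSpace W] {f : X → W} (hf : BaireOne f)
    {U : Set W} (hU : IsOpen U) : IsFSigma (f ⁻¹' U) := by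
  obtain ⟨g, hg, hgf⟩ := hf
  obtain ⟨C, hC, hCU, hUC⟩ := hU.exists_isClosed_subset_mem_nhds
  have : f ⁻¹' U = ⋃ (k : ℕ) (N : ℕ), ⋂ (n : ℕ) (_ : N ≤ n), g n ⁻¹' C k := by
    ext x
    simp only [mem_preimage, mem_iUnion, mem_iInter]
    constructor
    · intro hx
      obtain ⟨k, hk⟩ := hUC (f x) hx
      obtain ⟨N, hN⟩ := ((hgf x).eventually hk).exists_forall_of_atTop
      exact ⟨k, N, hN⟩
    · rintro ⟨k, N, hN⟩
      exact hCU k <| (hC k).mem_of_tendsto (hgf x) (eventually_atTop.2 ⟨N, hN⟩)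
  rw [this]
  exact .iUnion fun k => .iUnion fun N =>
    (isClosed_biInter fun n _ => (hC k).preimage (hg n)).isFSigma

end BaireOne

section Extension

variable {X Y : Type*} [TopologicalSpace X] [TopologicalSpace Y] [AddCommMonoid Y] [Module ℝ Y]
  [ContinuousAdd Y] [ContinuousSMul ℝ Y]

theorem exists_continuous_eqOn_of_pairwiseDisjoint [NormalSpace X] {ι : Type*} [DecidableEq ι]
    (s : Finset ι) {F : ι → Set X} (hF : ∀ i ∈ s, IsClosed (F i))
    (hdisj : (s : Set ι).PairwiseDisjoint F) (v : ι → Y) :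
    ∃ g : X → Y, Continuous g ∧ ∀ i ∈ s, EqOn g (fun _ => v i) (F i) := by
  have hsep : ∀ i ∈ s, ∃ φ : C(X, ℝ), EqOn φ 0 (⋃ j ∈ s.erase i, F j) ∧ EqOn φ 1 (F i) := by
    intro i hi
    have hdisj' : Disjoint (⋃ j ∈ s.erase i, F j) (F i) :=
      disjoint_iUnion₂_left.2 fun j hj =>
        hdisj (Finset.mem_of_mem_erase hj) hi (Finset.ne_of_mem_erase hj)
    obtain ⟨φ, hφ0, hφ1, -⟩ := exists_continuous_zero_one_of_isClosed
      (isClosed_biUnion_finset fun j hj => hF j (Finset.mem_of_mem_erase hj)) (hF i hi) hdisj'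
    exact ⟨φ, hφ0, hφ1⟩
  choose! φ hφ0 hφ1 using hsep
  refine ⟨fun x => ∑ j ∈ s, φ j x • v j, by fun_prop, fun i hi x hx => ?_⟩
  change ∑ j ∈ s, φ j x • v j = v i
  rw [Finset.sum_eq_single_of_mem i hi fun j hj hji => ?_]
  · simp [hφ1 i hi hx]
  · rw [hφ0 j hj (mem_biUnion (Finset.mem_erase.2 ⟨hji.symm, hi⟩) hx), Pi.zero_apply, zero_smul]

theorem exists_baireOne_eqOn_of_isFSigma_partition [NormalSpace X] {B : ℕ → Set X}
    (hB : ∀ k, IsFSigma (B k)) (hdisj : Pairwise (Disjoint on B)) (hcover : ⋃ k, B k = univ)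
    (v : ℕ → Y) : ∃ h : X → Y, BaireOne h ∧ ∀ k, EqOn h (fun _ => v k) (B k) := by
  choose F hF hBF using hB
  -- `g m` takes the value `v k` on the `m`-th closed approximation of `B k` for `k < m`
  set E : ℕ → ℕ → Set X := fun k m => accumulate (F k) m
  have hEB : ∀ k m, E k m ⊆ B k := fun k m => by
    rw [hBF k]; exact accumulate_subset_iUnion m
  choose g hg hgE using fun m => exists_continuous_eqOn_of_pairwiseDisjoint (Finset.range m)
    (F := fun k => E k m) (fun k _ => (finite_le_nat m).isClosed_biUnion fun i _ => hF k i)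
    (fun k _ l _ hkl => (hdisj hkl).mono (hEB k m) (hEB l m)) v
  have hmem : ∀ x, ∃ k, x ∈ B k := fun x => mem_iUnion.1 (hcover ▸ mem_univ x)
  choose κ hκ using hmem
  have hκ_eq : ∀ k, ∀ x ∈ B k, κ x = k := fun k x hx =>
    hdisj.eq (not_disjoint_iff.2 ⟨x, hκ x, hx⟩)
  refine ⟨fun x => v (κ x), ⟨g, hg, fun x => ?_⟩, fun k x hx => by simp [hκ_eq k x hx]⟩
  obtain ⟨i, hi⟩ := mem_iUnion.1 (hBF _ ▸ hκ x)
  refine tendsto_atTop_of_eventually_const (i₀ := max i (κ x + 1)) fun m hm => ?_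
  exact hgE m (κ x) (Finset.mem_range.2 (by omega)) (mem_accumulate.2 ⟨i, by omega, hi⟩)

end Extension

section ConvexHull

variable {E : Type*} [AddCommGroup E] [Module ℝ E]

theorem convexHull_range_eq_image_stdSimplex {ι : Type*} [Fintype ι] (c : ι → E) :
    convexHull ℝ (range c) = Fintype.linearCombination ℝ c '' stdSimplex ℝ ι := by
  classical
  rw [← convexHull_rangle_single_eq_stdSimplex, LinearMap.image_convexHull, ← range_comp]
  congr 1
  ext i
  simp

theorem convexHull_range_eq_iUnion_fin (g : ℕ → E) :
    convexHull ℝ (range g) = ⋃ N, convexHull ℝ (range fun i : Fin N => g i) := by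
  have hmono : Monotone fun N => convexHull ℝ (range fun i : Fin N => g i) := by
    refine fun M N hMN => convexHull_mono ?_
    rintro _ ⟨i, rfl⟩
    exact ⟨Fin.castLE hMN i, rfl⟩
  refine Subset.antisymm (convexHull_min ?_ ?_) ?_
  · rintro _ ⟨m, rfl⟩
    exact mem_iUnion.2 ⟨m + 1, subset_convexHull ℝ _ ⟨Fin.last m, rfl⟩⟩
  · exact hmono.directed_le.convex_iUnion fun N => convex_convexHull ℝ _
  · exact iUnion_subset fun N => convexHull_mono (range_subset_iff.2 fun i => ⟨i, rfl⟩)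

variable [TopologicalSpace E] [IsTopologicalAddGroup E]

theorem isOpen_setOf_mem_convexHull_range_add [ContinuousSMul ℝ E] {ι : Type*} [Fintype ι]
    {V : Set E} (hV : IsOpen V) :
    IsOpen {q : (ι → E) × E | q.2 ∈ convexHull ℝ (range q.1) + V} := by
  have : {q : (ι → E) × E | q.2 ∈ convexHull ℝ (range q.1) + V} =
      ⋃ w ∈ stdSimplex ℝ ι, (fun q : (ι → E) × E => -∑ i, w i • q.1 i + q.2) ⁻¹' V := by
    ext ⟨c, y⟩
    simp only [mem_ofPred_eq, convexHull_range_eq_image_stdSimplex, Set.mem_add,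
      mem_iUnion, mem_preimage, Fintype.linearCombination_apply, exists_prop]
    constructor
    · rintro ⟨_, ⟨w, hw, rfl⟩, v, hv, rfl⟩
      exact ⟨w, hw, by rwa [Fintype.linearCombination_apply, neg_add_cancel_left]⟩
    · rintro ⟨w, hw, hv⟩
      exact ⟨_, ⟨w, hw, rfl⟩, _, hv, add_neg_cancel_left _ _⟩
  rw [this]
  exact isOpen_biUnion fun w _ => hV.preimage (by fun_prop)

theorem tendsto_convexHull_tail_add_smallSets {g : ℕ → E} {a : E} (hg : Tendsto g atTop (𝓝 a))
    {V : ℕ → Set E} (hV : (𝓝 0).HasAntitoneBasis V) (hVc : ∀ n, Convex ℝ (V n)) :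
    Tendsto (fun n => convexHull ℝ (range fun m => g (n + m)) + V n) atTop (𝓝 a).smallSets := by
  rw [tendsto_smallSets_iff]
  intro W hW
  have hW0 : (a + ·) ⁻¹' W ∈ 𝓝 0 :=
    (continuous_const_add a).continuousAt.preimage_mem_nhds (by rwa [add_zero])
  obtain ⟨C, hC, hCC⟩ := exists_nhds_zero_half hW0
  obtain ⟨N, hNC⟩ := hV.mem_iff.1 hC
  obtain ⟨M, hM⟩ := eventually_atTop.1 <|
    (tendsto_sub_nhds_zero_iff.2 hg).eventually (hV.mem N)
  filter_upwards [eventually_ge_atTop (max N M)] with n hn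
  have hhull : convexHull ℝ (range fun m => g (n + m)) ⊆ (-a + ·) ⁻¹' V N := by
    refine convexHull_min (range_subset_iff.2 fun m => ?_) ((hVc N).translate_preimage_right _)
    show -a + g (n + m) ∈ V N
    rw [neg_add_eq_sub]
    exact hM (n + m) (by omega)
  rintro _ ⟨h, hh, v, hv, rfl⟩
  have := hCC _ (hNC (hhull hh)) _ (hNC (hV.antitone (le_of_max_le_left hn) hv))
  simpa [add_assoc] using this

end ConvexHull

theorem tendsto_ediam_zero_of_tendsto_smallSets {α ι : Type*} [PseudoEMetricSpace α]
    {l : Filter ι} {s : ι → Set α} {a : α} (h : Tendsto s l (𝓝 a).smallSets) :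
    Tendsto (fun i => Metric.ediam (s i)) l (𝓝 0) := by
  refine ENNReal.tendsto_nhds_zero.2 fun ε hε => ?_
  filter_upwards [tendsto_smallSets_iff.1 h _
    (Metric.closedEBall_mem_nhds a (ENNReal.half_pos hε.ne'))] with i hi
  calc Metric.ediam (s i) ≤ 2 * (ε / 2) :=
        (Metric.ediam_mono hi).trans Metric.ediam_closedEBall_le
    _ = ε := ENNReal.mul_div_cancel two_ne_zero ENNReal.ofNat_ne_top

section HullStrip

variable {X Y : Type*} [AddCommGroup Y] [Module ℝ Y] (g : ℕ → X → Y) (V : ℕ → Set Y)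

def hullStrip (n : ℕ) : Set (X × Y) :=
  {p | p.2 ∈ convexHull ℝ (range fun m => g (n + m) p.1) + V n}

variable {g V}

theorem hullStrip_succ_subset (hV : Antitone V) (n : ℕ) :
    hullStrip g V (n + 1) ⊆ hullStrip g V n := by
  refine fun p hp => add_subset_add (convexHull_mono ?_) (hV n.le_succ) hp
  rintro _ ⟨m, rfl⟩
  exact ⟨m + 1, by simp only [add_right_comm, add_assoc]⟩

theorem convex_hullStrip_section (hV : ∀ n, Convex ℝ (V n)) (n : ℕ) (x : X) :
    Convex ℝ {y | (x, y) ∈ hullStrip g V n} :=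
  (convex_convexHull ℝ (range fun m => g (n + m) x)).add (hV n)

theorem hullStrip_eq_iUnion (n : ℕ) :
    hullStrip g V n = ⋃ N : ℕ, (fun p : X × Y => ((fun i : Fin N => g (n + i) p.1), p.2)) ⁻¹'
      {q | q.2 ∈ convexHull ℝ (range q.1) + V n} := by
  ext p
  simp only [hullStrip, convexHull_range_eq_iUnion_fin fun m => g (n + m) p.1, iUnion_add,
    mem_ofPred_eq, mem_iUnion, mem_preimage]

variable [TopologicalSpace Y] [IsTopologicalAddGroup Y]

theorem mk_mem_hullStrip {x : X} {y : Y} (hg : Tendsto (fun m => g m x) atTop (𝓝 y))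
    {n : ℕ} (hV : V n ∈ 𝓝 0) : (x, y) ∈ hullStrip g V n := by
  have hg' : Tendsto (fun m => y - g m x) atTop (𝓝 0) := by
    simpa using (tendsto_sub_nhds_zero_iff.2 hg).neg
  obtain ⟨m, hm⟩ := (hg'.eventually hV).exists_forall_of_atTop
  exact ⟨_, subset_convexHull ℝ _ ⟨m, rfl⟩, _, hm (n + m) le_add_self, add_sub_cancel _ _⟩

theorem tendsto_hullStrip_section_smallSets {x : X} {y : Y}
    (hg : Tendsto (fun m => g m x) atTop (𝓝 y)) (hV : (𝓝 0).HasAntitoneBasis V)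
    (hVc : ∀ n, Convex ℝ (V n)) :
    Tendsto (fun n => {z | (x, z) ∈ hullStrip g V n}) atTop (𝓝 y).smallSets :=
  tendsto_convexHull_tail_add_smallSets hg hV hVc

theorem iInter_hullStrip_eq_graph [T1Space Y] {f : X → Y}
    (hg : ∀ x, Tendsto (fun m => g m x) atTop (𝓝 (f x))) (hV : (𝓝 0).HasAntitoneBasis V)
    (hVc : ∀ n, Convex ℝ (V n)) : ⋂ n, hullStrip g V n = {p | p.2 = f p.1} := by
  ext ⟨x, y⟩
  simp only [mem_iInter, mem_ofPred_eq]
  refine ⟨fun hy => ?_, fun hy n => hy ▸ mk_mem_hullStrip (hg x) (hV.mem n)⟩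
  by_contra hne
  obtain ⟨n, hn⟩ := (tendsto_smallSets_iff.1 (tendsto_hullStrip_section_smallSets (hg x) hV hVc)
    {y}ᶜ (isOpen_compl_singleton.mem_nhds (Ne.symm hne))).exists
  exact hn (hy n) rfl

variable [TopologicalSpace X] [ContinuousSMul ℝ Y] [TopologicalSpace.PseudoMetrizableSpace Y]

theorem isFSigma_hullStrip (hg : ∀ m, BaireOne (g m)) (hV : ∀ n, IsOpen (V n)) (n : ℕ) :
    IsFSigma (hullStrip g V n) := by
  rw [hullStrip_eq_iUnion]
  exact .iUnion fun N => (((BaireOne.pi fun i : Fin N => hg (n + i)).comp_continuous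
    continuous_fst).prodMk continuous_snd.baireOne).isFSigma_preimage
      (isOpen_setOf_mem_convexHull_range_add (hV n))

theorem isFSigma_setOf_exists_mem_hullStrip (hg : ∀ m, BaireOne (g m))
    (hV : ∀ n, IsOpen (V n)) {U : Set Y} (hU : IsOpen U) (n : ℕ) :
    IsFSigma {x | ∃ y ∈ U, (x, y) ∈ hullStrip g V n} := by
  have : {x | ∃ y ∈ U, (x, y) ∈ hullStrip g V n} = ⋃ N : ℕ,
      (fun x (i : Fin N) => g (n + i) x) ⁻¹'
        (Prod.fst '' ({q | q.2 ∈ convexHull ℝ (range q.1) + V n} ∩ univ ×ˢ U)) := by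
    ext x
    simp only [hullStrip_eq_iUnion n, mem_ofPred_eq, mem_iUnion, mem_preimage, mem_image,
      mem_inter_iff, mem_prod, mem_univ, true_and, Prod.exists, exists_and_right, exists_eq_right]
    tauto
  rw [this]
  exact .iUnion fun N => (BaireOne.pi fun i : Fin N => hg (n + i)).isFSigma_preimage <|
    isOpenMap_fst _ ((isOpen_setOf_mem_convexHull_range_add (hV n)).inter (isOpen_univ.prod hU))

end HullStrip

section Backward

variable {X Y : Type*} [TopologicalSpace X] [PerfectlyNormalSpace X]

theorem exists_baireOne_of_isFSigma_cover [TopologicalSpace Y] [AddCommMonoid Y] [Module ℝ Y]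
    [ContinuousAdd Y] [ContinuousSMul ℝ Y] {A : ℕ → Set X} (hA : ∀ k, IsFSigma (A k))
    (hcover : ⋃ k, A k = univ) (v : ℕ → Y) :
    ∃ h : X → Y, BaireOne h ∧ ∀ x, ∃ k, x ∈ A k ∧ h x = v k := by
  choose F hF hAF using hA
  set C : ℕ → Set X := fun p => F p.unpair.1 p.unpair.2
  have hCA : ∀ p, C p ⊆ A p.unpair.1 := fun p => by rw [hAF]; exact subset_iUnion (F _) _
  have hC : ⋃ p, disjointed C p = univ := by
    refine iUnion_disjointed.trans (eq_univ_of_forall fun x => ?_)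
    obtain ⟨k, hk⟩ := mem_iUnion.1 (hcover ▸ mem_univ x)
    obtain ⟨i, hi⟩ := mem_iUnion.1 (hAF k ▸ hk)
    exact mem_iUnion.2 ⟨Nat.pair k i, by simpa [C] using hi⟩
  have hCσ : ∀ p, IsFSigma (disjointed C p) := fun p => by
    rw [disjointed_eq_inter_compl]
    exact (hF _ _).isFSigma.inter
      ((finite_Iio p).isOpen_biInter fun j _ => (hF _ _).isOpen_compl).isFSigma
  obtain ⟨h, hh, hhv⟩ := exists_baireOne_eqOn_of_isFSigma_partition hCσ (disjoint_disjointed C)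
    hC fun p => v p.unpair.1
  refine ⟨h, hh, fun x => ?_⟩
  obtain ⟨p, hp⟩ := mem_iUnion.1 (hC ▸ mem_univ x)
  exact ⟨_, hCA p (disjointed_subset C p hp), hhv p hp⟩

variable [AddCommMonoid Y] [Module ℝ Y] [PseudoEMetricSpace Y] [ContinuousAdd Y]
  [ContinuousSMul ℝ Y] [TopologicalSpace.SeparableSpace Y]

theorem exists_baireOne_forall_exists_edist_lt {G : Set (X × Y)} (hG : ∀ x, ∃ y, (x, y) ∈ G)
    (hproj : ∀ U : Set Y, IsOpen U → IsFSigma {x | ∃ y ∈ U, (x, y) ∈ G}) {r : ℝ≥0∞}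
    (hr : 0 < r) : ∃ h : X → Y, BaireOne h ∧ ∀ x, ∃ y, (x, y) ∈ G ∧ edist (h x) y < r := by
  obtain ⟨u, hu⟩ := TopologicalSpace.exists_dense_seq Y
  have hcover : ⋃ k, {x | ∃ y ∈ Metric.eball (u k) r, (x, y) ∈ G} = univ := by
    refine eq_univ_of_forall fun x => ?_
    obtain ⟨y, hy⟩ := hG x
    obtain ⟨k, hk⟩ := hu.exists_mem_open Metric.isOpen_eball ⟨y, Metric.mem_eball_self hr⟩
    exact mem_iUnion.2 ⟨k, y, Metric.mem_eball'.2 (Metric.mem_eball.1 hk), hy⟩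
  obtain ⟨h, hh, hhu⟩ := exists_baireOne_of_isFSigma_cover
    (fun k => hproj _ Metric.isOpen_eball) hcover u
  refine ⟨h, hh, fun x => ?_⟩
  obtain ⟨k, ⟨y, hy, hxy⟩, hk⟩ := hhu x
  exact ⟨y, hxy, hk ▸ Metric.mem_eball'.1 hy⟩

theorem baireTwo_of_graph_subset_of_tendsto_ediam {f : X → Y} {G : ℕ → Set (X × Y)}
    (hgraph : ∀ n x, (x, f x) ∈ G n)
    (hdiam : ∀ x, Tendsto (fun n => Metric.ediam {y | (x, y) ∈ G n}) atTop (𝓝 0))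
    (hproj : ∀ U : Set Y, IsOpen U → ∀ n, IsFSigma {x | ∃ y ∈ U, (x, y) ∈ G n}) :
    BaireTwo f := by
  choose h hh hhG using fun n => exists_baireOne_forall_exists_edist_lt
    (fun x => ⟨f x, hgraph n x⟩) (fun U hU => hproj U hU n)
    (ENNReal.inv_pos.2 (ENNReal.natCast_ne_top n))
  refine ⟨h, hh, fun x => tendsto_iff_edist_tendsto_0.2 ?_⟩
  have hbound : ∀ n, edist (h n x) (f x) ≤ (n : ℝ≥0∞)⁻¹ + Metric.ediam {y | (x, y) ∈ G n} := by
    intro n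
    obtain ⟨y, hy, hhy⟩ := hhG n x
    calc edist (h n x) (f x) ≤ edist (h n x) y + edist y (f x) := edist_triangle _ _ _
      _ ≤ _ := add_le_add hhy.le (Metric.edist_le_ediam_of_mem hy (hgraph n x))
  have hlim := ENNReal.tendsto_inv_nat_nhds_zero.add (hdiam x)
  rw [add_zero] at hlim
  exact tendsto_of_tendsto_of_tendsto_of_le_of_le tendsto_const_nhds hlim (fun n => zero_le) hbound

end Backward

theorem LocallyConvexSpace.exists_convex_open_antitone_basis_zero {E : Type*} [AddCommGroup E]
    [Module ℝ E] [TopologicalSpace E] [IsTopologicalAddGroup E] [ContinuousConstSMul ℝ E]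
    [LocallyConvexSpace ℝ E] [(𝓝 (0 : E)).IsCountablyGenerated] :
    ∃ V : ℕ → Set E, (𝓝 0).HasAntitoneBasis V ∧ ∀ n, IsOpen (V n) ∧ Convex ℝ (V n) := by
  obtain ⟨V, hV, hVbasis⟩ := (convex_open_basis_zero ℝ E).exists_antitone_subbasis
  exact ⟨V, hVbasis, fun n => (hV n).2⟩

theorem baireTwo_iff_graph_fsigma_strips_general
    {X Y : Type*} [MetricSpace X]
    [AddCommGroup Y] [Module ℝ Y] [MetricSpace Y]
    [IsTopologicalAddGroup Y] [ContinuousSMul ℝ Y] [LocallyConvexSpace ℝ Y]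
    [TopologicalSpace.SeparableSpace Y]
    (f : X → Y) :
    BaireTwo f ↔
      ∃ G : ℕ → Set (X × Y),
        (∀ n, G (n + 1) ⊆ G n) ∧
        (∀ n, IsFSigma (G n)) ∧
        (∀ n, ∀ x : X, Convex ℝ {y : Y | (x, y) ∈ G n}) ∧
        (⋂ n, G n) = {p : X × Y | p.2 = f p.1} ∧
        (∀ x : X,
          Tendsto (fun n => EMetric.diam {y : Y | (x, y) ∈ G n}) atTop (𝓝 0)) ∧
        (∀ U : Set Y, IsOpen U → ∀ n,
          IsFSigma {x : X | ∃ y ∈ U, (x, y) ∈ G n}) := by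
  constructor
  · rintro ⟨g, hg, hgf⟩
    obtain ⟨V, hV, hVoc⟩ := LocallyConvexSpace.exists_convex_open_antitone_basis_zero (E := Y)
    have hVc : ∀ n, Convex ℝ (V n) := fun n => (hVoc n).2
    refine ⟨hullStrip g V, hullStrip_succ_subset hV.antitone, isFSigma_hullStrip hg
      (fun n => (hVoc n).1), convex_hullStrip_section hVc, iInter_hullStrip_eq_graph hgf hV hVc,
      fun x => tendsto_ediam_zero_of_tendsto_smallSets
        (tendsto_hullStrip_section_smallSets (hgf x) hV hVc),
      fun U hU => isFSigma_setOf_exists_mem_hullStrip hg (fun n => (hVoc n).1) hU⟩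
  · rintro ⟨G, -, -, -, hgraph, hdiam, hproj⟩
    exact baireTwo_of_graph_subset_of_tendsto_ediam (fun n x => mem_iInter.1 (hgraph.ge rfl) n)
      hdiam hproj

/-- Let `X` be a metrized Suslin space and `Y` a separable Fréchet space.
A function `f : X → Y` is Baire-2 iff there is a nested sequence of Fσ subsets of `X × Y`
with convex vertical sections whose intersection is the graph of `f`, whose vertical
sections above each point have diameter tending to `0`, and such that the projection to `X`
of the part of each set lying over any open `U ⊆ Y` is an Fσ subset of `X`. -/
theorem baireTwo_iff_graph_fsigma_strips
    {X Y : Type*} [MetricSpace X]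
    (hX : ∃ (Z : Type) (_ : TopologicalSpace Z) (_ : PolishSpace Z) (g : Z → X),
      Continuous g ∧ Function.Surjective g)
    [AddCommGroup Y] [Module ℝ Y] [MetricSpace Y]
    [IsTopologicalAddGroup Y] [ContinuousSMul ℝ Y] [LocallyConvexSpace ℝ Y]
    [CompleteSpace Y] [TopologicalSpace.SeparableSpace Y]
    (hinv : ∀ a x y : Y, dist (a + x) (a + y) = dist x y)
    (f : X → Y) :
    BaireTwo f ↔
      ∃ G : ℕ → Set (X × Y),
        (∀ n, G (n + 1) ⊆ G n) ∧
        (∀ n, IsFSigma (G n)) ∧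
        (∀ n, ∀ x : X, Convex ℝ {y : Y | (x, y) ∈ G n}) ∧
        (⋂ n, G n) = {p : X × Y | p.2 = f p.1} ∧
        (∀ x : X,
          Tendsto (fun n => EMetric.diam {y : Y | (x, y) ∈ G n}) atTop (𝓝 0)) ∧
        (∀ U : Set Y, IsOpen U → ∀ n,
          IsFSigma {x : X | ∃ y ∈ U, (x, y) ∈ G n}) :=
  baireTwo_iff_graph_fsigma_strips_general f
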